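/- For every ζ > 0, (2 + 3/ζ)·K₃(ζ)/K₂(ζ) < 2·(1 + 4/ζ + 6/ζ²); equivalently, setting θ = 1/ζ and G(ζ) := K₃(ζ)/K₂(ζ), one has (3θ+2)·G(1/θ) < 2·(6θ² + 4θ + 1) for every θ > 0. Here K_ν(ζ) := ∫₀^∞ cosh(νt)·exp(−ζ·cosh t) dt. -/

import Mathlib

/-!
Write `E t = exp (-ζ cosh t)`, so that `E' = -ζ sinh · E`. Integration by parts on `(0, ∞)` gives
`∫ g' E = ζ ∫ g sinh E` for every `g` with `g 0 = 0` and at most exponential growth.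
With `g t = sinh (ν t)` this is the recurrence `ζ (K_{ν+1} - K_{ν-1}) = 2ν K_ν`. With `g = ibpFactor`,
chosen so that `g sinh = 2 (cosh 2t - cosh t)`, the left side is `3 K₁` plus the integral of the
positive weight `ibpWeight · E`, whence `(2ζ + 3) K₁ < 2ζ K₂`. Eliminating `K₃` by the recurrence
at `ν = 2` turns the claim into exactly this inequality.
-/

/-- Modified Bessel function of the second kind,
`K_ν(ζ) = ∫₀^∞ cosh(νt)·exp(−ζ·cosh t) dt`. -/
noncomputable def besselK (ν ζ : ℝ) : ℝ :=
  ∫ t in Set.Ioi (0 : ℝ), Real.cosh (ν * t) * Real.exp (-ζ * Real.cosh t)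

open Real MeasureTheory Set Filter Topology Asymptotics

lemma cosh_le_exp_abs (x : ℝ) : cosh x ≤ exp |x| := by
  rw [← cosh_abs, cosh_eq]
  linarith [exp_le_exp.2 (neg_le_self (abs_nonneg x))]

lemma abs_sinh_le_cosh (x : ℝ) : |sinh x| ≤ cosh x := by
  rw [abs_sinh, ← cosh_abs]
  exact (sinh_lt_cosh _).le

lemma sq_div_four_le_cosh {t : ℝ} (ht : 0 ≤ t) : t ^ 2 / 4 ≤ cosh t := by
  have h := pow_div_factorial_le_exp (x := t) ht 2
  norm_num [Nat.factorial] at h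
  linarith [cosh_add_sinh t, sinh_lt_cosh t]

lemma isBigO_cosh_mul_exp (ν : ℝ) :
    (fun t => cosh (ν * t)) =O[atTop] fun t => exp (|ν| * t) := by
  refine IsBigO.of_bound 1 ?_
  filter_upwards [eventually_ge_atTop 0] with t ht
  rw [norm_of_nonneg (cosh_pos _).le, norm_of_nonneg (exp_pos _).le, one_mul]
  exact (cosh_le_exp_abs _).trans_eq (by rw [abs_mul, abs_of_nonneg ht])

lemma isBigO_sinh_mul_exp (ν : ℝ) :
    (fun t => sinh (ν * t)) =O[atTop] fun t => exp (|ν| * t) :=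
  (IsBigO.of_bound 1 (Eventually.of_forall fun t => by
    simpa [abs_of_pos (cosh_pos _)] using abs_sinh_le_cosh (ν * t))).trans (isBigO_cosh_mul_exp ν)

lemma isBigO_exp_mul_exp_neg_mul_cosh {ζ : ℝ} (hζ : 0 < ζ) (B : ℝ) :
    (fun t => exp (B * t) * exp (-ζ * cosh t)) =O[atTop] fun t => exp (-1 * t) := by
  refine IsBigO.of_bound 1 ?_
  filter_upwards [eventually_ge_atTop (max 0 (4 * (B + 1) / ζ))] with t ht
  have ht0 : 0 ≤ t := le_of_max_le_left ht
  have htB : 4 * (B + 1) ≤ ζ * t := by rw [← div_le_iff₀' hζ]; exact le_of_max_le_right ht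
  have : (B + 1) * t ≤ ζ * cosh t := by nlinarith [sq_div_four_le_cosh ht0]
  rw [norm_of_nonneg (by positivity), norm_of_nonneg (by positivity), one_mul, ← exp_add,
    exp_le_exp]
  linarith

lemma setIntegral_Ioi_pos {f : ℝ → ℝ} {a : ℝ} (hf : ∀ t ∈ Ioi a, 0 < f t)
    (hfi : IntegrableOn f (Ioi a)) : 0 < ∫ t in Ioi a, f t := by
  refine (setIntegral_pos_iff_support_of_nonneg_ae ?_ hfi).2 ?_
  · exact (ae_restrict_iff' measurableSet_Ioi).2 (ae_of_all _ fun t ht => (hf t ht).le)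
  · have hsub : Ioi a ⊆ Function.support f ∩ Ioi a := fun t ht => ⟨(hf t ht).ne', ht⟩
    exact (Measure.measure_Ioi_pos _ a).trans_le (measure_mono hsub)

section

variable {ζ B : ℝ} {f : ℝ → ℝ}

lemma isBigO_mul_exp_neg_mul_cosh (hζ : 0 < ζ) (hf : f =O[atTop] fun t => exp (B * t)) :
    (fun t => f t * exp (-ζ * cosh t)) =O[atTop] fun t => exp (-1 * t) :=
  (hf.mul (isBigO_refl _ _)).trans (isBigO_exp_mul_exp_neg_mul_cosh hζ B)

lemma integrableOn_mul_exp_neg_mul_cosh (hζ : 0 < ζ) (hfc : ContinuousOn f (Ici 0))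
    (hf : f =O[atTop] fun t => exp (B * t)) :
    IntegrableOn (fun t => f t * exp (-ζ * cosh t)) (Ioi 0) :=
  integrable_of_isBigO_exp_neg one_pos (hfc.mul (by fun_prop))
    (isBigO_mul_exp_neg_mul_cosh hζ hf)

lemma tendsto_mul_exp_neg_mul_cosh (hζ : 0 < ζ) (hf : f =O[atTop] fun t => exp (B * t)) :
    Tendsto (fun t => f t * exp (-ζ * cosh t)) atTop (𝓝 0) :=
  (isBigO_mul_exp_neg_mul_cosh hζ hf).trans_tendsto
    (by simpa using tendsto_exp_neg_atTop_nhds_zero)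

theorem integral_deriv_mul_exp_neg_mul_cosh {g g' : ℝ → ℝ} (hζ : 0 < ζ)
    (hg : ∀ t, HasDerivAt g (g' t) t) (hg0 : g 0 = 0) (hg'c : Continuous g')
    (hgB : g =O[atTop] fun t => exp (B * t)) (hg'B : g' =O[atTop] fun t => exp (B * t)) :
    ∫ t in Ioi 0, g' t * exp (-ζ * cosh t)
      = ζ * ∫ t in Ioi 0, g t * sinh t * exp (-ζ * cosh t) := by
  have hgc : Continuous g := continuous_iff_continuousAt.2 fun t => (hg t).continuousAt
  have hE (t : ℝ) : HasDerivAt (fun t => exp (-ζ * cosh t))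
      (exp (-ζ * cosh t) * (-ζ * sinh t)) t :=
    ((hasDerivAt_cosh t).const_mul (-ζ)).exp
  have hgsinh : (fun t => g t * sinh t) =O[atTop] fun t => exp ((B + 1) * t) := by
    simpa [add_mul, exp_add] using hgB.mul (isBigO_sinh_mul_exp 1)
  have hibp := integral_Ioi_mul_deriv_eq_deriv_mul (a' := 0) (b' := 0) (fun t _ => hg t)
    (fun t _ => hE t) ?_ (integrableOn_mul_exp_neg_mul_cosh hζ hg'c.continuousOn hg'B) ?_
    (tendsto_mul_exp_neg_mul_cosh hζ hgB)
  · have hv' : (fun t => g t * (exp (-ζ * cosh t) * (-ζ * sinh t)))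
        = fun t => -ζ * (g t * sinh t * exp (-ζ * cosh t)) := by
      funext t; ring
    rw [hv', integral_const_mul] at hibp
    linarith
  · exact IntegrableOn.congr_fun
      ((integrableOn_mul_exp_neg_mul_cosh hζ (by fun_prop) hgsinh).const_mul (-ζ))
      (fun t _ => by simp only [Pi.mul_apply]; ring) measurableSet_Ioi
  · have hcont : Continuous fun t => g t * exp (-ζ * cosh t) := by fun_prop
    have h := (hcont.tendsto 0).mono_left (nhdsWithin_le_nhds (s := Ioi 0))
    rwa [hg0, zero_mul] at h

end

lemma integrableOn_besselK_integrand (ν : ℝ) {ζ : ℝ} (hζ : 0 < ζ) :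
    IntegrableOn (fun t => cosh (ν * t) * exp (-ζ * cosh t)) (Ioi 0) :=
  integrableOn_mul_exp_neg_mul_cosh hζ (by fun_prop) (isBigO_cosh_mul_exp ν)

lemma besselK_pos (ν : ℝ) {ζ : ℝ} (hζ : 0 < ζ) : 0 < besselK ν ζ :=
  setIntegral_Ioi_pos (fun t _ => by positivity) (integrableOn_besselK_integrand ν hζ)

theorem besselK_add_one_sub_besselK_sub_one (ν : ℝ) {ζ : ℝ} (hζ : 0 < ζ) :
    ζ * (besselK (ν + 1) ζ - besselK (ν - 1) ζ) = 2 * ν * besselK ν ζ := by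
  have hg (t : ℝ) : HasDerivAt (fun t => sinh (ν * t)) (ν * cosh (ν * t)) t := by
    simpa [mul_comm] using ((hasDerivAt_id t).const_mul ν).sinh
  have hibp := integral_deriv_mul_exp_neg_mul_cosh hζ hg (by simp) (by fun_prop)
    (isBigO_sinh_mul_exp ν) ((isBigO_cosh_mul_exp ν).const_mul_left ν)
  have hprod (t : ℝ) :
      sinh (ν * t) * sinh t = (cosh ((ν + 1) * t) - cosh ((ν - 1) * t)) / 2 := by
    rw [add_mul, sub_mul, one_mul, cosh_add, cosh_sub]
    ring
  have hL : ∫ t in Ioi 0, ν * cosh (ν * t) * exp (-ζ * cosh t) = ν * besselK ν ζ := by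
    simp_rw [mul_assoc]
    exact integral_const_mul ν _
  have hR : ∫ t in Ioi 0, sinh (ν * t) * sinh t * exp (-ζ * cosh t)
      = (besselK (ν + 1) ζ - besselK (ν - 1) ζ) / 2 := by
    have hpt (t : ℝ) : sinh (ν * t) * sinh t * exp (-ζ * cosh t) = (cosh ((ν + 1) * t)
        * exp (-ζ * cosh t) - cosh ((ν - 1) * t) * exp (-ζ * cosh t)) / 2 := by
      rw [hprod]; ring
    simp_rw [hpt]
    rw [integral_div, integral_sub (integrableOn_besselK_integrand _ hζ)
      (integrableOn_besselK_integrand _ hζ)]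
    rfl
  rw [hL, hR] at hibp
  linarith

noncomputable def ibpFactor (t : ℝ) : ℝ := 2 * (2 * cosh t + 1) * sinh t / (cosh t + 1)

noncomputable def ibpWeight (t : ℝ) : ℝ := (cosh t + 2) * (cosh t - 1) / (cosh t + 1)

lemma cosh_add_one_pos (t : ℝ) : 0 < cosh t + 1 := by positivity

lemma ibpWeight_pos {t : ℝ} (ht : t ≠ 0) : 0 < ibpWeight t :=
  div_pos (mul_pos (by positivity) (sub_pos.2 (one_lt_cosh.2 ht))) (cosh_add_one_pos t)

lemma continuous_ibpWeight : Continuous ibpWeight :=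
  Continuous.div (by fun_prop) (by fun_prop) fun t => (cosh_add_one_pos t).ne'

lemma hasDerivAt_ibpFactor (t : ℝ) : HasDerivAt ibpFactor (ibpWeight t + 3 * cosh t) t := by
  have h := ((((hasDerivAt_cosh t).const_mul 2).add_const 1).const_mul 2).mul
    (hasDerivAt_sinh t) |>.div ((hasDerivAt_cosh t).add_const 1) (cosh_add_one_pos t).ne'
  refine h.congr_deriv ?_
  simp only [Pi.mul_apply, ibpWeight]
  field_simp
  linear_combination 2 * sinh_sq t

lemma ibpFactor_mul_sinh (t : ℝ) : ibpFactor t * sinh t = 2 * cosh (2 * t) - 2 * cosh t := by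
  rw [ibpFactor, cosh_two_mul, div_mul_eq_mul_div, div_eq_iff (cosh_add_one_pos t).ne']
  linear_combination (2 * cosh t) * sinh_sq t

lemma isBigO_ibpFactor : ibpFactor =O[atTop] exp := by
  refine (IsBigO.of_bound 4 (Eventually.of_forall fun t => ?_)).trans
    (by simpa using isBigO_sinh_mul_exp 1)
  have h1 := one_le_cosh t
  simp only [ibpFactor, norm_eq_abs]
  rw [abs_div, abs_mul, abs_of_pos (cosh_add_one_pos t), div_le_iff₀ (cosh_add_one_pos t),
    abs_of_pos (by positivity : (0 : ℝ) < 2 * (2 * cosh t + 1))]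
  nlinarith [abs_nonneg (sinh t)]

lemma isBigO_ibpWeight : ibpWeight =O[atTop] exp := by
  refine (IsBigO.of_bound 1 (Eventually.of_forall fun t => ?_)).trans
    (by simpa using isBigO_cosh_mul_exp 1)
  have h1 := one_le_cosh t
  simp only [ibpWeight, norm_eq_abs, one_mul, abs_of_pos (cosh_pos t)]
  rw [abs_of_nonneg (div_nonneg (by nlinarith) (cosh_add_one_pos t).le),
    div_le_iff₀ (cosh_add_one_pos t)]
  nlinarith

theorem two_mul_add_three_mul_besselK_one_lt {ζ : ℝ} (hζ : 0 < ζ) :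
    (2 * ζ + 3) * besselK 1 ζ < 2 * ζ * besselK 2 ζ := by
  have hcosh : cosh =O[atTop] exp := by simpa using isBigO_cosh_mul_exp 1
  have hibp := integral_deriv_mul_exp_neg_mul_cosh (B := 1) hζ hasDerivAt_ibpFactor
    (by simp [ibpFactor]) (continuous_ibpWeight.add (by fun_prop))
    (by simpa using isBigO_ibpFactor) (by simpa using isBigO_ibpWeight.add (hcosh.const_mul_left 3))
  have hwi : IntegrableOn (fun t => ibpWeight t * exp (-ζ * cosh t)) (Ioi 0) :=
    integrableOn_mul_exp_neg_mul_cosh (B := 1) hζ continuous_ibpWeight.continuousOn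
      (by simpa using isBigO_ibpWeight)
  have hL : ∫ t in Ioi 0, (ibpWeight t + 3 * cosh t) * exp (-ζ * cosh t)
      = (∫ t in Ioi 0, ibpWeight t * exp (-ζ * cosh t)) + 3 * besselK 1 ζ := by
    have hpt (t : ℝ) : (ibpWeight t + 3 * cosh t) * exp (-ζ * cosh t)
        = ibpWeight t * exp (-ζ * cosh t) + 3 * (cosh (1 * t) * exp (-ζ * cosh t)) := by
      rw [one_mul]; ring
    simp_rw [hpt]
    rw [integral_add hwi ((integrableOn_besselK_integrand 1 hζ).const_mul 3), integral_const_mul]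
    rfl
  have hR : ∫ t in Ioi 0, ibpFactor t * sinh t * exp (-ζ * cosh t)
      = 2 * besselK 2 ζ - 2 * besselK 1 ζ := by
    have hpt (t : ℝ) : ibpFactor t * sinh t * exp (-ζ * cosh t)
        = 2 * (cosh (2 * t) * exp (-ζ * cosh t)) - 2 * (cosh (1 * t) * exp (-ζ * cosh t)) := by
      rw [ibpFactor_mul_sinh, one_mul]; ring
    simp_rw [hpt]
    rw [integral_sub ((integrableOn_besselK_integrand 2 hζ).const_mul 2)
      ((integrableOn_besselK_integrand 1 hζ).const_mul 2), integral_const_mul, integral_const_mul]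
    rfl
  have hpos : 0 < ∫ t in Ioi 0, ibpWeight t * exp (-ζ * cosh t) :=
    setIntegral_Ioi_pos (fun t ht => mul_pos (ibpWeight_pos (ne_of_gt ht)) (exp_pos _)) hwi
  rw [hL, hR] at hibp
  linarith

theorem stmt4 : ∀ ζ : ℝ, 0 < ζ →
    (2 + 3 / ζ) * (besselK 3 ζ / besselK 2 ζ) < 2 * (1 + 4 / ζ + 6 / ζ ^ 2) := by
  intro ζ hζ
  have hK₂ := besselK_pos 2 hζ
  have hrec := besselK_add_one_sub_besselK_sub_one 2 hζ
  have hlt := two_mul_add_three_mul_besselK_one_lt hζ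
  norm_num at hrec
  have hK₃ : besselK 3 ζ = besselK 1 ζ + 4 * besselK 2 ζ / ζ := by
    field_simp
    linarith
  rw [← sub_pos, hK₃]
  have hdiff : 2 * (1 + 4 / ζ + 6 / ζ ^ 2)
      - (2 + 3 / ζ) * ((besselK 1 ζ + 4 * besselK 2 ζ / ζ) / besselK 2 ζ)
      = (2 * ζ * besselK 2 ζ - (2 * ζ + 3) * besselK 1 ζ) / (ζ * besselK 2 ζ) := by
    field_simp
    ring
  rw [hdiff]
  exact div_pos (by linarith) (by positivity)
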